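/- arXiv:2511.19812 — 2 statements merged into one kernel-verified Lean document; each statement's English description precedes it below -/
import Mathlib

section
/- For vectors a1, a2 in F4^ℓ, the sum-rank weight of the codeword a1*x + a2*x^2 (i.e., the sum over coordinates i of the F2-rank of the linear map x ↦ a1_i*x + a2_i*x^2 on F4) equals 2*wt_H(a1) + 2*wt_H(a2) − 3*|supp(a1) ∩ supp(a2)|. -/
open scoped Classical

noncomputable section

/-- The field with 4 elements. -/
abbrev F4 := GaloisField 2 2

noncomputable instance : Fintype F4 := Fintype.ofFinite _

/-- The `F2`-linear map `x ↦ x1*x + x2*x^2` on `F4`. -/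
noncomputable def Lmap (x1 x2 : F4) : F4 →ₗ[ZMod 2] F4 where
  toFun x := x1 * x + x2 * x ^ 2
  map_add' x y := by
    have h : (x + y) ^ 2 = x ^ 2 + y ^ 2 := add_pow_char x y 2
    try simp only []
    rw [h]; ring
  map_smul' c x := by
    have hc : c ^ 2 = c := ZMod.pow_card c
    simp only [Algebra.smul_def, RingHom.id_apply, mul_pow, ← map_pow, hc]
    ring

/-- `F2`-rank of an `F2`-linear endomorphism of `F4`. -/
noncomputable def rk (f : F4 →ₗ[ZMod 2] F4) : ℕ :=
  Module.finrank (ZMod 2) (LinearMap.range f)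

/-- Sum-rank weight of `a1*x + a2*x^2`. -/
noncomputable def srWt {ℓ : ℕ} (a1 a2 : Fin ℓ → F4) : ℕ :=
  ∑ i, rk (Lmap (a1 i) (a2 i))

/-! In characteristic 2, `x1 * x + x2 * x ^ 2 = x * (x1 + x2 * x)`, so the kernel of `Lmap x1 x2`
is all of `F4` when both coefficients vanish, `{0}` when exactly one does, and the `F2`-line
`{0, x1 / x2}` when neither does. Rank–nullity in the 2-dimensional space `F4` gives ranks `0`, `2`
and `1`, which is the claimed formula coordinate by coordinate. -/

lemma finrank_F4 : Module.finrank (ZMod 2) F4 = 2 :=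
  GaloisField.finrank 2 two_ne_zero

lemma rk_add_finrank_ker (f : F4 →ₗ[ZMod 2] F4) :
    rk f + Module.finrank (ZMod 2) (LinearMap.ker f) = 2 := by
  rw [rk, LinearMap.finrank_range_add_finrank_ker, finrank_F4]

lemma Lmap_apply (x1 x2 x : F4) : Lmap x1 x2 x = x1 * x + x2 * x ^ 2 := rfl

lemma Lmap_eq_zero_iff {x1 x2 x : F4} : Lmap x1 x2 x = 0 ↔ x = 0 ∨ x2 * x = x1 := by
  rw [Lmap_apply, show x1 * x + x2 * x ^ 2 = x * (x1 + x2 * x) by ring, mul_eq_zero,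
    CharTwo.add_eq_zero, eq_comm (a := x1)]

lemma rk_Lmap_zero_zero : rk (Lmap 0 0) = 0 := by
  have hzero : Lmap 0 0 = 0 := by
    ext x
    simp [Lmap_apply]
  rw [rk, hzero, LinearMap.range_zero, finrank_bot]

lemma rk_Lmap_eq_two {x1 x2 : F4} (h : ∀ x ≠ 0, x2 * x ≠ x1) : rk (Lmap x1 x2) = 2 := by
  have hker : LinearMap.ker (Lmap x1 x2) = ⊥ := by
    refine (Submodule.eq_bot_iff _).mpr fun x hx => ?_
    by_contra hx0
    exact h x hx0 ((Lmap_eq_zero_iff.mp hx).resolve_left hx0)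
  have hrank := rk_add_finrank_ker (Lmap x1 x2)
  rwa [hker, finrank_bot, add_zero] at hrank

lemma ker_Lmap_of_ne_zero {x1 x2 : F4} (h2 : x2 ≠ 0) :
    LinearMap.ker (Lmap x1 x2) = (ZMod 2) ∙ (x1 / x2) := by
  ext x
  rw [LinearMap.mem_ker, Lmap_eq_zero_iff, Submodule.mem_span_singleton, mul_comm,
    ← eq_div_iff h2]
  constructor
  · rintro (rfl | rfl)
    exacts [⟨0, zero_smul _ _⟩, ⟨1, one_smul _ _⟩]
  · rintro ⟨a, rfl⟩
    fin_cases a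
    exacts [Or.inl (zero_smul _ _), Or.inr (one_smul _ _)]

lemma rk_Lmap_eq_one {x1 x2 : F4} (h1 : x1 ≠ 0) (h2 : x2 ≠ 0) : rk (Lmap x1 x2) = 1 := by
  have hker := rk_add_finrank_ker (Lmap x1 x2)
  rw [ker_Lmap_of_ne_zero h2, finrank_span_singleton (div_ne_zero h1 h2)] at hker
  omega

lemma rk_Lmap (x1 x2 : F4) :
    (rk (Lmap x1 x2) : ℤ) = 2 * (if x1 ≠ 0 then 1 else 0) + 2 * (if x2 ≠ 0 then 1 else 0) -
      3 * (if x1 ≠ 0 ∧ x2 ≠ 0 then 1 else 0) := by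
  rcases eq_or_ne x1 0 with rfl | h1 <;> rcases eq_or_ne x2 0 with rfl | h2
  · simp [rk_Lmap_zero_zero]
  · simp [h2, rk_Lmap_eq_two fun x hx => mul_ne_zero h2 hx]
  · simp [h1, rk_Lmap_eq_two (x2 := 0) fun x _ => by simpa using h1.symm]
  · simp [h1, h2, rk_Lmap_eq_one h1 h2]

theorem stmt3 {ℓ : ℕ} (a1 a2 : Fin ℓ → F4) :
    (srWt a1 a2 : ℤ) =
      2 * (hammingNorm a1 : ℤ) + 2 * (hammingNorm a2 : ℤ) -
        3 * ((Finset.univ.filter (fun i => a1 i ≠ 0 ∧ a2 i ≠ 0)).card : ℤ) := by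
  simp only [srWt, hammingNorm, Nat.cast_sum, rk_Lmap, Finset.natCast_card_filter,
    Finset.sum_sub_distrib, Finset.sum_add_distrib, Finset.mul_sum]
end
end

section
/- Let C1, C2 ⊆ F4^ℓ be nonzero linear codes with minimum distances d1, d2, and suppose d2 ≥ d_sr where d_sr is the minimum sum-rank distance of SR(C1,C2). If e1, e2 ∈ F4^ℓ satisfy wt_sr(e1*x + e2*x^2) ≤ ⌊(d_sr − 1)/2⌋, then wt_H(e2) ≤ ⌊(d2 − 1)/2⌋. -/
open scoped Classical

noncomputable section

/-!
At every coordinate where `e2` is nonzero, `x ↦ e1 x + e2 x²` is a nonzero map, since evaluating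
at `1` and at an element of `F4 \ F2` forces `e2 = 0` otherwise; so that coordinate contributes
rank at least one, `wt_H(e2) ≤ wt_sr(e1 x + e2 x²)`, and the bound follows from `d_sr ≤ d2`.
-/

lemma exists_ne_zero_ne_one_F4 : ∃ x : F4, x ≠ 0 ∧ x ≠ 1 := by
  have hcard : ({0, 1} : Finset F4).card < (Finset.univ : Finset F4).card := by
    rw [Finset.card_pair zero_ne_one, Finset.card_univ, ← Nat.card_eq_fintype_card,
      GaloisField.card 2 2 two_ne_zero]
    norm_num
  obtain ⟨x, -, hx⟩ := Finset.exists_mem_notMem_of_card_lt_card hcard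
  exact ⟨x, by simpa [not_or] using hx⟩

lemma eq_zero_of_mul_add_mul_sq_eq_zero {R : Type*} [CommRing R] [IsDomain R] {a b x : R}
    (hx0 : x ≠ 0) (hx1 : x ≠ 1) (h1 : a + b = 0) (hx : a * x + b * x ^ 2 = 0) : b = 0 := by
  have : b * (x * (x - 1)) = 0 := by linear_combination hx - x * h1
  simpa [hx0, sub_ne_zero.mpr hx1] using this

lemma Lmap_ne_zero {a b : F4} (hb : b ≠ 0) : Lmap a b ≠ 0 := by
  intro h
  obtain ⟨x, hx0, hx1⟩ := exists_ne_zero_ne_one_F4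
  have hx : a * x + b * x ^ 2 = 0 := by simpa [Lmap] using LinearMap.congr_fun h x
  have h1 : a + b = 0 := by simpa [Lmap] using LinearMap.congr_fun h 1
  exact hb (eq_zero_of_mul_add_mul_sq_eq_zero hx0 hx1 h1 hx)

lemma one_le_rk {f : F4 →ₗ[ZMod 2] F4} (hf : f ≠ 0) : 1 ≤ rk f := by
  rw [rk, Submodule.one_le_finrank_iff]
  exact mt LinearMap.range_eq_bot.mp hf

lemma hammingNorm_le_srWt {ℓ : ℕ} (a1 a2 : Fin ℓ → F4) : hammingNorm a2 ≤ srWt a1 a2 := by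
  rw [hammingNorm, Finset.card_filter, srWt]
  refine Finset.sum_le_sum fun i _ => ?_
  split_ifs with h
  · exact one_le_rk (Lmap_ne_zero h)
  · exact Nat.zero_le _

theorem stmt13_general {ℓ : ℕ} (d2 dsr : ℕ)
    (h2 : dsr ≤ d2)
    (e1 e2 : Fin ℓ → F4) (he : srWt e1 e2 ≤ (dsr - 1) / 2) :
    hammingNorm e2 ≤ (d2 - 1) / 2 :=
  calc hammingNorm e2 ≤ srWt e1 e2 := hammingNorm_le_srWt e1 e2
    _ ≤ (dsr - 1) / 2 := he
    _ ≤ (d2 - 1) / 2 := Nat.div_le_div_right (Nat.sub_le_sub_right h2 1)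

theorem stmt13 {ℓ : ℕ} (C1 C2 : Submodule F4 (Fin ℓ → F4))
    (hC1 : C1 ≠ ⊥) (hC2 : C2 ≠ ⊥) (d1 d2 dsr : ℕ)
    (hd1 : IsLeast {w | ∃ c ∈ C1, c ≠ 0 ∧ hammingNorm c = w} d1)
    (hd2 : IsLeast {w | ∃ c ∈ C2, c ≠ 0 ∧ hammingNorm c = w} d2)
    (hdsr : IsLeast {w | ∃ a1 ∈ C1, ∃ a2 ∈ C2, (a1, a2) ≠ (0, 0) ∧ srWt a1 a2 = w} dsr)
    (h2 : dsr ≤ d2)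
    (e1 e2 : Fin ℓ → F4) (he : srWt e1 e2 ≤ (dsr - 1) / 2) :
    hammingNorm e2 ≤ (d2 - 1) / 2 :=
  stmt13_general d2 dsr h2 e1 e2 he
end
end
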